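/- If p ≥ 2 and G belongs to the class W_p, then the number of vertices of G is at least p·α(G); moreover equality n(G) = p·α(G) holds if and only if G is the disjoint union of α(G) complete graphs, each on p vertices. -/

import Mathlib

open Classical

noncomputable section

variable {V : Type*}

/-- `s` is an independent set of `G`. -/
def IndepSet (G : SimpleGraph V) (s : Set V) : Prop :=
  ∀ ⦃a⦄, a ∈ s → ∀ ⦃b⦄, b ∈ s → ¬ G.Adj a b

/-- The independence number `α(G)`. -/
def alphaNum [Fintype V] (G : SimpleGraph V) : ℕ :=
  sSup {n | ∃ s : Set V, IndepSet G s ∧ s.ncard = n}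

/-- `s` is a maximal independent set of `G`. -/
def MaximalIndep (G : SimpleGraph V) (s : Set V) : Prop :=
  IndepSet G s ∧ ∀ t : Set V, IndepSet G t → s ⊆ t → s = t

/-- `G` is well-covered: all maximal independent sets have cardinality `α(G)`. -/
def WellCovered [Fintype V] (G : SimpleGraph V) : Prop :=
  ∀ s : Set V, MaximalIndep G s → s.ncard = alphaNum G

/-- The open neighborhood `N_G(S)` of a set of vertices. -/
def openNbhd (G : SimpleGraph V) (S : Set V) : Set V :=
  {v | v ∉ S ∧ ∃ u ∈ S, G.Adj u v}

/-- The closed neighborhood `N_G[S]`. -/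
def closedNbhd (G : SimpleGraph V) (S : Set V) : Set V :=
  S ∪ openNbhd G S

/-- The vertex set of the localization `G_S = G - N_G[S]`. -/
def localSet (G : SimpleGraph V) (S : Set V) : Set V :=
  (closedNbhd G S)ᶜ

/-- `G` belongs to the class `W_p`. -/
def Wp (p : ℕ) [Fintype V] (G : SimpleGraph V) : Prop :=
  p ≤ Fintype.card V ∧
    ∀ A : Fin p → Set V,
      (∀ i, IndepSet G (A i)) →
      (∀ i j, i ≠ j → Disjoint (A i) (A j)) →
      ∃ S : Fin p → Set V,
        (∀ i j, i ≠ j → Disjoint (S i) (S j)) ∧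
        (∀ i, IndepSet G (S i) ∧ (S i).ncard = alphaNum G) ∧
        (∀ i, A i ⊆ S i)

/-- `G` is `α`-critical: deleting any edge increases the independence number. -/
def AlphaCritical [Fintype V] (G : SimpleGraph V) : Prop :=
  ∀ a b : V, G.Adj a b → alphaNum G < alphaNum (G.deleteEdges {s(a, b)})

/-- The vertex set of `G_{ab} = G - (N_G(a) ∪ N_G(b))`. -/
def edgeLocalSet (G : SimpleGraph V) (a b : V) : Set V :=
  (G.neighborSet a ∪ G.neighborSet b)ᶜ

/-! Extending `p` empty sets gives `p` disjoint maximum independent sets, so `n ≥ p α`.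
If `n = p α`, any `p` disjoint maximum independent sets cover `V`. Extending the singletons of `p`
neighbours of `x` would then put `x` into a set together with one of its neighbours, so
`deg x < p`. Extending `{x}` gives a neighbour of `x` in each of the `p - 1` other sets, so
`deg x ≥ p - 1`; extending `{u, w}` and `{x}`, for non-adjacent neighbours `u, w` of `x`, would
give `p` neighbours. Hence every closed neighbourhood is a `p`-clique, and the closed
neighbourhoods of the vertices of a maximum independent set split `G` into `α` such cliques. -/

open Set Function

lemma Set.exists_fin_embedding_range_eq [Finite V] {s : Set V} {n : ℕ} (hs : s.ncard = n) :
    ∃ f : Fin n ↪ V, range f = s := by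
  obtain ⟨m, f, hf⟩ := s.toFinite.fin_embedding
  obtain rfl : m = n := by rw [← hs, ← hf, ncard_range_of_injective f.injective, Nat.card_fin]
  exact ⟨f, hf⟩

lemma Set.ncard_iUnion_eq_sum [Finite V] {ι : Type*} [Fintype ι] {s : ι → Set V}
    (hs : Pairwise (Disjoint on s)) : (⋃ i, s i).ncard = ∑ i, (s i).ncard := by
  rw [ncard_iUnion_of_finite (fun _ => toFinite _) hs, finsum_eq_sum_of_fintype]

lemma IndepSet.insert {G : SimpleGraph V} {s : Set V} {x : V} (hs : IndepSet G s)
    (hx : ∀ y ∈ s, ¬ G.Adj x y) : IndepSet G (insert x s) := by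
  rintro a (rfl | ha) b (rfl | hb) hab
  · exact G.irrefl hab
  · exact hx b hb hab
  · exact hx a ha hab.symm
  · exact hs ha hb hab

section Independence

variable [Fintype V] {G : SimpleGraph V}

lemma bddAbove_indepSet_ncard (G : SimpleGraph V) :
    BddAbove {n | ∃ s : Set V, IndepSet G s ∧ s.ncard = n} := by
  refine ⟨Fintype.card V, ?_⟩
  rintro n ⟨s, -, rfl⟩
  simpa using ncard_le_ncard (subset_univ s)

lemma IndepSet.ncard_le_alphaNum {s : Set V} (hs : IndepSet G s) : s.ncard ≤ alphaNum G :=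
  le_csSup (bddAbove_indepSet_ncard G) ⟨s, hs, rfl⟩

lemma exists_indepSet_ncard_eq_alphaNum (G : SimpleGraph V) :
    ∃ s : Set V, IndepSet G s ∧ s.ncard = alphaNum G :=
  Nat.sSup_mem (s := {n | ∃ s : Set V, IndepSet G s ∧ s.ncard = n})
    ⟨0, ∅, fun _ h => h.elim, ncard_empty V⟩ (bddAbove_indepSet_ncard G)

lemma IndepSet.neighborSet_inter_nonempty {s : Set V} (hs : IndepSet G s)
    (hcard : s.ncard = alphaNum G) {x : V} (hx : x ∉ s) : (G.neighborSet x ∩ s).Nonempty := by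
  by_contra h
  have hle := (hs.insert fun y hy hxy => h ⟨y, hxy, hy⟩).ncard_le_alphaNum
  rw [ncard_insert_of_notMem hx, hcard] at hle
  omega

lemma sum_ncard_neighborSet_inter_le (G : SimpleGraph V) (x : V) {ι : Type*} {R : ι → Set V}
    (hR : Pairwise (Disjoint on R)) (t : Finset ι) :
    ∑ k ∈ t, (G.neighborSet x ∩ R k).ncard ≤ (G.neighborSet x).ncard := by
  have hdisj : (t : Set ι).PairwiseDisjoint fun k => G.neighborSet x ∩ R k :=
    fun k _ l _ hkl => (hR hkl).mono inter_subset_right inter_subset_right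
  rw [← finsum_mem_coe_finset, ← t.finite_toSet.ncard_biUnion (fun _ _ => toFinite _) hdisj]
  exact ncard_le_ncard (iUnion₂_subset fun _ _ => inter_subset_left)

/-- `x` has a neighbour in each of the `p - 2` maximum independent sets `R k`, `k ≠ i, j`, since
they miss `x`. -/
lemma ncard_neighborSet_inter_add_le {p : ℕ} {R : Fin p → Set V} (hR : Pairwise (Disjoint on R))
    (hmax : ∀ k, IndepSet G (R k) ∧ (R k).ncard = alphaNum G) {x : V} {i j : Fin p}
    (hx : x ∈ R i) (hij : i ≠ j) :
    (G.neighborSet x ∩ R j).ncard + (p - 2) ≤ (G.neighborSet x).ncard := by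
  have hj : j ∈ Finset.univ.erase i := Finset.mem_erase.mpr ⟨hij.symm, Finset.mem_univ j⟩
  have hone : ∀ k ∈ (Finset.univ.erase i).erase j, 1 ≤ (G.neighborSet x ∩ R k).ncard := by
    intro k hk
    have hki : k ≠ i := (Finset.mem_erase.mp (Finset.mem_erase.mp hk).2).1
    exact ((hmax k).1.neighborSet_inter_nonempty (hmax k).2
      fun hxk => disjoint_left.mp (hR hki) hxk hx).ncard_pos
  calc (G.neighborSet x ∩ R j).ncard + (p - 2)
      = (G.neighborSet x ∩ R j).ncard + ((Finset.univ.erase i).erase j).card := by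
        rw [Finset.card_erase_of_mem hj, Finset.card_erase_of_mem (Finset.mem_univ i),
          Finset.card_univ, Fintype.card_fin, Nat.sub_sub]
    _ ≤ (G.neighborSet x ∩ R j).ncard +
          ∑ k ∈ (Finset.univ.erase i).erase j, (G.neighborSet x ∩ R k).ncard := by
        gcongr
        simpa using Finset.card_nsmul_le_sum _ _ 1 hone
    _ = ∑ k ∈ Finset.univ.erase i, (G.neighborSet x ∩ R k).ncard :=
        Finset.add_sum_erase _ (fun k => (G.neighborSet x ∩ R k).ncard) hj
    _ ≤ (G.neighborSet x).ncard := sum_ncard_neighborSet_inter_le G x hR _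

end Independence

lemma iUnion_eq_univ_of_ncard_eq [Fintype V] {p m : ℕ} (hn : Fintype.card V = p * m)
    {R : Fin p → Set V} (hR : Pairwise (Disjoint on R)) (hcard : ∀ k, (R k).ncard = m) :
    ⋃ k, R k = univ := by
  refine eq_of_subset_of_ncard_le (subset_univ _) ?_
  rw [ncard_univ, Nat.card_eq_fintype_card, hn, ncard_iUnion_eq_sum hR]
  simp [hcard]

lemma indepSet_singleton (G : SimpleGraph V) (x : V) : IndepSet G {x} := by
  rintro a rfl b rfl
  exact G.irrefl

lemma closedNbhd_singleton (G : SimpleGraph V) (x : V) :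
    closedNbhd G {x} = insert x (G.neighborSet x) := by
  ext v
  simp only [closedNbhd, openNbhd, mem_union, mem_singleton_iff, mem_ofPred_eq, exists_eq_left,
    mem_insert_iff, SimpleGraph.mem_neighborSet]
  tauto

section Wp

variable [Fintype V] {G : SimpleGraph V} {p : ℕ}

lemma Wp.mul_alphaNum_le_card (hG : Wp p G) : p * alphaNum G ≤ Fintype.card V := by
  obtain ⟨R, hRd, hRmax, -⟩ :=
    hG.2 (fun _ => ∅) (fun _ _ h => h.elim) (fun _ _ _ => disjoint_empty _)
  calc p * alphaNum G = (⋃ k, R k).ncard := by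
        rw [ncard_iUnion_eq_sum fun k l h => hRd k l h]
        simp [fun k => (hRmax k).2]
    _ ≤ Fintype.card V := by simpa using ncard_le_ncard (subset_univ (⋃ k, R k))

lemma Wp.exists_extend_pair (hG : Wp p G) {i j : Fin p} (hij : i ≠ j) {B C : Set V}
    (hB : IndepSet G B) (hC : IndepSet G C) (hBC : Disjoint B C) :
    ∃ R : Fin p → Set V, Pairwise (Disjoint on R) ∧
      (∀ k, IndepSet G (R k) ∧ (R k).ncard = alphaNum G) ∧ B ⊆ R i ∧ C ⊆ R j := by
  let A : Fin p → Set V := fun k => if k = i then B else if k = j then C else ∅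
  have hAind : ∀ k, IndepSet G (A k) := by
    intro k
    simp only [A]
    split_ifs
    exacts [hB, hC, fun _ h => h.elim]
  have hAdisj : ∀ k l, k ≠ l → Disjoint (A k) (A l) := by
    intro k l hkl
    simp only [A]
    split_ifs <;> simp_all [hBC.symm]
  obtain ⟨R, hRd, hRmax, hAR⟩ := hG.2 A hAind hAdisj
  exact ⟨R, fun k l h => hRd k l h, hRmax, by simpa [A] using hAR i,
    by simpa [A, hij.symm] using hAR j⟩

lemma Wp.sub_one_le_ncard_neighborSet (hp : 2 ≤ p) (hG : Wp p G) (x : V) :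
    p - 1 ≤ (G.neighborSet x).ncard := by
  have h01 : (⟨0, by omega⟩ : Fin p) ≠ ⟨1, by omega⟩ := by simp
  obtain ⟨R, hRd, hRmax, hxR, -⟩ := hG.exists_extend_pair h01 (indepSet_singleton G x)
    (fun _ h => h.elim) (disjoint_empty _)
  have hx : x ∈ R ⟨0, _⟩ := hxR rfl
  have hone := ((hRmax _).1.neighborSet_inter_nonempty (hRmax _).2
    fun hx' => disjoint_left.mp (hRd h01) hx hx').ncard_pos
  have := ncard_neighborSet_inter_add_le hRd hRmax hx h01
  omega

lemma Wp.ncard_neighborSet_lt (hG : Wp p G) (hn : Fintype.card V = p * alphaNum G) (x : V) :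
    (G.neighborSet x).ncard < p := by
  by_contra! h
  obtain ⟨t, hts, htp⟩ := exists_subset_card_eq h
  obtain ⟨f, rfl⟩ := exists_fin_embedding_range_eq htp
  obtain ⟨R, hRd, hRmax, hfR⟩ := hG.2 (fun k => {f k}) (fun k => indepSet_singleton G (f k))
    (fun k l hkl => disjoint_singleton.mpr (f.injective.ne hkl))
  have hcover := iUnion_eq_univ_of_ncard_eq hn (fun k l h => hRd k l h) fun k => (hRmax k).2
  obtain ⟨k, hxk⟩ := mem_iUnion.mp (hcover.symm ▸ mem_univ x)
  exact (hRmax k).1 hxk (hfR k rfl) (hts (mem_range_self k))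

lemma Wp.adj_of_adj_of_adj (hp : 2 ≤ p) (hG : Wp p G) (hn : Fintype.card V = p * alphaNum G)
    {x u w : V} (hu : G.Adj x u) (hw : G.Adj x w) (huw : u ≠ w) : G.Adj u w := by
  by_contra huw'
  have h01 : (⟨0, by omega⟩ : Fin p) ≠ ⟨1, by omega⟩ := by simp
  have hpair : IndepSet G {u, w} := (indepSet_singleton G w).insert (by simpa using huw')
  have hdisj : Disjoint ({u, w} : Set V) {x} := by simp [hu.ne, hw.ne]
  obtain ⟨R, hRd, hRmax, huwR, hxR⟩ :=
    hG.exists_extend_pair h01.symm hpair (indepSet_singleton G x) hdisj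
  have htwo : 2 ≤ (G.neighborSet x ∩ R ⟨1, by omega⟩).ncard := by
    rw [← ncard_pair huw]
    exact ncard_le_ncard (insert_subset ⟨hu, huwR (by simp)⟩
      (singleton_subset_iff.mpr ⟨hw, huwR (by simp)⟩))
  have := ncard_neighborSet_inter_add_le hRd hRmax (hxR rfl) h01
  have := hG.ncard_neighborSet_lt hn x
  omega

lemma Wp.ncard_closedNbhd_singleton (hp : 2 ≤ p) (hG : Wp p G)
    (hn : Fintype.card V = p * alphaNum G) (x : V) : (closedNbhd G {x}).ncard = p := by
  rw [closedNbhd_singleton, ncard_insert_of_notMem (G.notMem_neighborSet_self)]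
  have := hG.sub_one_le_ncard_neighborSet hp x
  have := hG.ncard_neighborSet_lt hn x
  omega

lemma Wp.adj_of_mem_closedNbhd (hp : 2 ≤ p) (hG : Wp p G) (hn : Fintype.card V = p * alphaNum G)
    {x u w : V} (hu : u ∈ closedNbhd G {x}) (hw : w ∈ closedNbhd G {x}) (huw : u ≠ w) :
    G.Adj u w := by
  rw [closedNbhd_singleton] at hu hw
  rcases hu with rfl | hu <;> rcases hw with rfl | hw
  · exact absurd rfl huw
  · exact hw
  · exact hu.symm
  · exact hG.adj_of_adj_of_adj hp hn hu hw huw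

lemma Wp.closedNbhd_eq_of_mem (hp : 2 ≤ p) (hG : Wp p G) (hn : Fintype.card V = p * alphaNum G)
    {x y : V} (hy : y ∈ closedNbhd G {x}) : closedNbhd G {x} = closedNbhd G {y} := by
  refine eq_of_subset_of_ncard_le (fun z hz => ?_) ?_
  · rw [closedNbhd_singleton]
    by_cases hzy : z = y
    · exact Or.inl hzy
    · exact Or.inr (hG.adj_of_mem_closedNbhd hp hn hy hz (Ne.symm hzy))
  · rw [hG.ncard_closedNbhd_singleton hp hn, hG.ncard_closedNbhd_singleton hp hn]

lemma Wp.disjoint_closedNbhd (hp : 2 ≤ p) (hG : Wp p G) (hn : Fintype.card V = p * alphaNum G)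
    {x y : V} (hxy : x ≠ y) (hadj : ¬ G.Adj x y) :
    Disjoint (closedNbhd G {x}) (closedNbhd G {y}) := by
  refine disjoint_left.mpr fun v hvx hvy => ?_
  have hy : y ∈ closedNbhd G {x} := by
    rw [hG.closedNbhd_eq_of_mem hp hn hvx, ← hG.closedNbhd_eq_of_mem hp hn hvy,
      closedNbhd_singleton]
    exact mem_insert y _
  rw [closedNbhd_singleton] at hy
  exact hy.elim (fun h => hxy h.symm) hadj

lemma Wp.exists_clique_partition (hp : 2 ≤ p) (hG : Wp p G)
    (hn : Fintype.card V = p * alphaNum G) :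
    ∃ P : Fin (alphaNum G) → Set V,
      (∀ i j, i ≠ j → Disjoint (P i) (P j)) ∧
      (⋃ i, P i) = univ ∧
      (∀ i, (P i).ncard = p) ∧
      (∀ i, ∀ a ∈ P i, ∀ b ∈ P i, a ≠ b → G.Adj a b) ∧
      (∀ i j, i ≠ j → ∀ a ∈ P i, ∀ b ∈ P j, ¬ G.Adj a b) := by
  obtain ⟨S, hS, hSc⟩ := exists_indepSet_ncard_eq_alphaNum G
  obtain ⟨f, rfl⟩ := exists_fin_embedding_range_eq hSc
  have hdisj : ∀ i j, i ≠ j → Disjoint (closedNbhd G {f i}) (closedNbhd G {f j}) :=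
    fun i j hij => hG.disjoint_closedNbhd hp hn (f.injective.ne hij)
      (hS (mem_range_self i) (mem_range_self j))
  refine ⟨fun i => closedNbhd G {f i}, hdisj, ?_, fun i => hG.ncard_closedNbhd_singleton hp hn _,
    fun i _ ha _ hb => hG.adj_of_mem_closedNbhd hp hn ha hb, ?_⟩
  · refine eq_univ_of_forall fun v => mem_iUnion.mpr ?_
    by_cases hv : v ∈ range f
    · obtain ⟨i, rfl⟩ := hv
      exact ⟨i, subset_union_left rfl⟩
    · obtain ⟨y, hvy, i, rfl⟩ := hS.neighborSet_inter_nonempty hSc hv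
      refine ⟨i, ?_⟩
      rw [closedNbhd_singleton]
      exact Or.inr (G.adj_symm hvy)
  · intro i j hij a ha b hb hab
    have hb' : b ∈ closedNbhd G {f i} := by
      rw [hG.closedNbhd_eq_of_mem hp hn ha, closedNbhd_singleton]
      exact Or.inr hab
    exact disjoint_left.mp (hdisj i j hij) hb' hb

end Wp

theorem stmt12 [Fintype V] (G : SimpleGraph V) (p : ℕ) (hp : 2 ≤ p)
    (hG : Wp p G) :
    p * alphaNum G ≤ Fintype.card V ∧
      (Fintype.card V = p * alphaNum G ↔
        ∃ P : Fin (alphaNum G) → Set V,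
          (∀ i j, i ≠ j → Disjoint (P i) (P j)) ∧
          (⋃ i, P i) = Set.univ ∧
          (∀ i, (P i).ncard = p) ∧
          (∀ i, ∀ a ∈ P i, ∀ b ∈ P i, a ≠ b → G.Adj a b) ∧
          (∀ i j, i ≠ j → ∀ a ∈ P i, ∀ b ∈ P j, ¬ G.Adj a b)) := by
  refine ⟨hG.mul_alphaNum_le_card, hG.exists_clique_partition hp, ?_⟩
  rintro ⟨P, hdisj, hcover, hcard, -, -⟩
  rw [← Nat.card_eq_fintype_card, ← ncard_univ, ← hcover,
    ncard_iUnion_eq_sum fun i j h => hdisj i j h]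
  simp [hcard, mul_comm]
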